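/- Characterization of the local admissible set: for σ > 0, a point (1/q, 1/r; 1/q̃, 1/r̃) ∈ [0,1]^4 belongs to the set generated by (i) taking pairs (Q,R), (Q̃,R̃) with 1/Q = σ(1/2 − 1/R), 1/Q̃ = σ(1/2 − 1/R̃), 0 ≤ 1/Q, 1/Q̃, 1/R, 1/R̃ ≤ 1/2, (ii) scaling all four reciprocal exponents by a common factor θ ∈ [0,1], and (iii) increasing 1/q and 1/q̃ arbitrarily, if and only if: r, r̃ ≥ 2; (σ−1)/r ≤ σ/r̃ and (σ−1)/r̃ ≤ σ/r; and 1/q ≥ σ(1/r̃ − 1/r) and 1/q̃ ≥ σ(1/r − 1/r̃). -/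
import Mathlib

set_option maxHeartbeats 1000000


/-- Characterization of the local admissible set: a point `(1/q, 1/r; 1/q̃, 1/r̃) ∈ [0,1]⁴`
arises from sharp σ-admissible pairs `(Q,R)`, `(Q̃,R̃)` by scaling all reciprocal exponents
by a common `θ ∈ [0,1]` and then increasing `1/q`, `1/q̃`, if and only if `r, r̃ ≥ 2`,
`(σ-1)/r ≤ σ/r̃`, `(σ-1)/r̃ ≤ σ/r`, `1/q ≥ σ(1/r̃ - 1/r)` and `1/q̃ ≥ σ(1/r - 1/r̃)`.
Here `xq = 1/q`, `xr = 1/r`, `xqt = 1/q̃`, `xrt = 1/r̃`. -/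
theorem local_admissible_set_characterization (σ xq xr xqt xrt : ℝ) (hσ : 0 < σ)
    (hxq : xq ∈ Set.Icc (0:ℝ) 1) (hxr : xr ∈ Set.Icc (0:ℝ) 1)
    (hxqt : xqt ∈ Set.Icc (0:ℝ) 1) (hxrt : xrt ∈ Set.Icc (0:ℝ) 1) :
    (∃ iQ iR iQt iRt θ : ℝ,
        iQ = σ * (1/2 - iR) ∧ iQt = σ * (1/2 - iRt) ∧
        0 ≤ iQ ∧ iQ ≤ 1/2 ∧ 0 ≤ iQt ∧ iQt ≤ 1/2 ∧
        0 ≤ iR ∧ iR ≤ 1/2 ∧ 0 ≤ iRt ∧ iRt ≤ 1/2 ∧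
        0 ≤ θ ∧ θ ≤ 1 ∧
        xr = θ * iR ∧ xrt = θ * iRt ∧ θ * iQ ≤ xq ∧ θ * iQt ≤ xqt)
    ↔ (xr ≤ 1/2 ∧ xrt ≤ 1/2 ∧
        (σ - 1) * xr ≤ σ * xrt ∧ (σ - 1) * xrt ≤ σ * xr ∧
        σ * (xrt - xr) ≤ xq ∧ σ * (xr - xrt) ≤ xqt) := by
  obtain ⟨hxq0, hxq1⟩ := hxq
  obtain ⟨hxr0, hxr1⟩ := hxr
  obtain ⟨hxqt0, hxqt1⟩ := hxqt
  obtain ⟨hxrt0, hxrt1⟩ := hxrt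
  constructor
  · rintro ⟨iQ, iR, iQt, iRt, θ, hQ, hQt, hQ0, hQh, hQt0, hQth, hR0, hRh, hRt0, hRth,
      hθ0, hθ1, hr, hrt, hq, hqt⟩
    subst hQ hQt hr hrt
    refine ⟨by nlinarith, by nlinarith, ?_, ?_, ?_, ?_⟩
    · rcases le_total σ 1 with hσ1 | hσ1
      · nlinarith [mul_nonneg hθ0 hR0, mul_nonneg hθ0 hRt0,
          mul_nonneg (mul_nonneg hθ0 hR0) (sub_nonneg.2 hσ1)]
      · nlinarith [mul_nonneg hθ0 (mul_nonneg (sub_nonneg.2 hσ1) (sub_nonneg.2 hRh)),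
          mul_nonneg hθ0 (sub_nonneg.2 hQth)]
    · rcases le_total σ 1 with hσ1 | hσ1
      · nlinarith [mul_nonneg hθ0 hR0, mul_nonneg hθ0 hRt0,
          mul_nonneg (mul_nonneg hθ0 hRt0) (sub_nonneg.2 hσ1)]
      · nlinarith [mul_nonneg hθ0 (mul_nonneg (sub_nonneg.2 hσ1) (sub_nonneg.2 hRth)),
          mul_nonneg hθ0 (sub_nonneg.2 hQh)]
    · nlinarith [mul_nonneg (mul_nonneg hσ.le hθ0) (sub_nonneg.2 hRth)]
    · nlinarith [mul_nonneg (mul_nonneg hσ.le hθ0) (sub_nonneg.2 hRh)]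
  · rintro ⟨h1, h2, h3, h4, h5, h6⟩
    rcases le_total xr xrt with hc | hc
    · by_cases h0 : xrt = 0
      · have hxr0' : xr = 0 := le_antisymm (h0 ▸ hc) hxr0
        refine ⟨0, 1/2, 0, 1/2, 0, by ring, by ring, le_refl 0, by norm_num,
          le_refl 0, by norm_num, by norm_num, by norm_num, by norm_num, by norm_num,
          le_refl 0, by norm_num, by rw [hxr0', zero_mul], by rw [h0, zero_mul],
          by rw [zero_mul]; exact hxq0, by rw [zero_mul]; exact hxqt0⟩
      · have hpos : 0 < xrt := lt_of_le_of_ne hxrt0 (Ne.symm h0)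
        have hiR1 : xr / (2*xrt) ≤ 1/2 := by
          rw [div_le_iff₀ (by linarith)]; linarith
        have hiR0 : 0 ≤ xr / (2*xrt) := by positivity
        refine ⟨σ * (1/2 - xr / (2*xrt)), xr / (2*xrt), 0, 1/2, 2*xrt,
          rfl, by ring, ?_, ?_, le_refl 0, by norm_num, hiR0, hiR1, by norm_num, by norm_num,
          by linarith, by linarith, ?_, by ring, ?_, by rw [mul_zero]; exact hxqt0⟩
        · nlinarith
        · have h4' : σ * (xrt - xr) ≤ xrt := by nlinarith
          rw [← sub_nonneg]
          have heq : 1/2 - σ * (1/2 - xr / (2*xrt)) = (xrt - σ * (xrt - xr)) / (2*xrt) := by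
            field_simp
          rw [heq]
          exact div_nonneg (by linarith) (by linarith)
        · field_simp
        · have heq : 2*xrt * (σ * (1/2 - xr / (2*xrt))) = σ * (xrt - xr) := by
            field_simp
          rw [heq]; exact h5
    · by_cases h0 : xr = 0
      · have hxrt0' : xrt = 0 := le_antisymm (h0 ▸ hc) hxrt0
        refine ⟨0, 1/2, 0, 1/2, 0, by ring, by ring, le_refl 0, by norm_num,
          le_refl 0, by norm_num, by norm_num, by norm_num, by norm_num, by norm_num,
          le_refl 0, by norm_num, by rw [h0, zero_mul], by rw [hxrt0', zero_mul],
          by rw [zero_mul]; exact hxq0, by rw [zero_mul]; exact hxqt0⟩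
      · have hpos : 0 < xr := lt_of_le_of_ne hxr0 (Ne.symm h0)
        have hiR1 : xrt / (2*xr) ≤ 1/2 := by
          rw [div_le_iff₀ (by linarith)]; linarith
        have hiR0 : 0 ≤ xrt / (2*xr) := by positivity
        refine ⟨0, 1/2, σ * (1/2 - xrt / (2*xr)), xrt / (2*xr), 2*xr,
          by ring, rfl, le_refl 0, by norm_num, ?_, ?_, by norm_num, by norm_num, hiR0, hiR1,
          by linarith, by linarith, by ring, ?_, by rw [mul_zero]; exact hxq0, ?_⟩
        · nlinarith
        · have h3' : σ * (xr - xrt) ≤ xr := by nlinarith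
          rw [← sub_nonneg]
          have heq : 1/2 - σ * (1/2 - xrt / (2*xr)) = (xr - σ * (xr - xrt)) / (2*xr) := by
            field_simp
          rw [heq]
          exact div_nonneg (by linarith) (by linarith)
        · field_simp
        · have heq : 2*xr * (σ * (1/2 - xrt / (2*xr))) = σ * (xr - xrt) := by
            field_simp
          rw [heq]; exact h6
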